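/- Let M be an inside factorial monoid with base Q. If g + w = w' for some g ∈ G(Q) (the group generated by Q) and w, w' ∈ D_M(Q), then g = 0 and w = w'. -/
import Mathlib


/-- The sum `Σ_{q ∈ Q} λ_q q` encoded by a finitely supported function. -/
def fsum {M : Type*} [AddCancelCommMonoid M] (f : M →₀ ℕ) : M :=
  f.sum fun q n => n • q

/-- `⟨Q⟩` is factorial, freely generated by `Q`. -/
def FreeOn {M : Type*} [AddCancelCommMonoid M] (Q : Set M) : Prop :=
  ∀ f g : M →₀ ℕ, (f.support : Set M) ⊆ Q → (g.support : Set M) ⊆ Q →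
    fsum f = fsum g → f = g

/-- `M` is inside factorial with base `Q`. -/
def InsideFactorial {M : Type*} [AddCancelCommMonoid M] (Q : Set M) : Prop :=
  FreeOn Q ∧ ∀ x : M, x ≠ 0 → ∃ m : ℕ, 0 < m ∧ m • x ∈ AddSubmonoid.closure Q

/-- `D_M(Q)`: elements of `M` all of whose coordinates with respect to the base `Q`
are strictly smaller than `1` (i.e. `n • x = Σ λ_q q` with all `λ_q < n`). -/
def DM {M : Type*} [AddCancelCommMonoid M] (Q : Set M) : Set M :=
  {x | ∃ n : ℕ, 0 < n ∧ ∃ f : M →₀ ℕ, (f.support : Set M) ⊆ Q ∧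
    n • x = fsum f ∧ ∀ q : M, f q < n}


lemma fsum_add {M : Type*} [AddCancelCommMonoid M] (f g : M →₀ ℕ) :
    fsum (f + g) = fsum f + fsum g := by
  unfold fsum
  rw [Finsupp.sum_add_index']
  · intro q; simp
  · intro q a b; rw [add_smul]

lemma fsum_smul {M : Type*} [AddCancelCommMonoid M] (n : ℕ) (f : M →₀ ℕ) :
    fsum (n • f) = n • fsum f := by
  induction n with
  | zero => simp [fsum]
  | succ k ih =>
      rw [succ_nsmul, fsum_add, ih, succ_nsmul]

/-- in an inside factorial monoid with base `Q`, if `g + w = w'` with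
`g ∈ G(Q)` (written `g = fsum f − fsum f'`) and `w, w' ∈ D_M(Q)`, then `g = 0` and
`w = w'`. -/
theorem DM_unique {M : Type*} [AddCancelCommMonoid M]
    (hred : ∀ a b : M, a + b = 0 → a = 0)
    (Q : Set M) (hIF : InsideFactorial Q)
    (f f' : M →₀ ℕ) (hf : (f.support : Set M) ⊆ Q) (hf' : (f'.support : Set M) ⊆ Q)
    (w w' : M) (hw : w ∈ DM Q) (hw' : w' ∈ DM Q)
    (heq : fsum f + w = fsum f' + w') :
    fsum f = fsum f' ∧ w = w' := by
  obtain ⟨n, hn, g, hg, hng, hglt⟩ := hw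
  obtain ⟨n', hn', g', hg', hng', hglt'⟩ := hw'
  set N := n' * n with hN
  have hNpos : 0 < N := Nat.mul_pos hn' hn
  classical
  have hNw : N • w = fsum (n' • g) := by rw [fsum_smul, ← hng, hN, mul_smul]
  have hNw' : N • w' = fsum (n • g') := by
    rw [fsum_smul, ← hng', hN, mul_comm, mul_smul]
  have key : fsum (N • f + n' • g) = fsum (N • f' + n • g') := by
    calc fsum (N • f + n' • g) = N • fsum f + N • w := by
            rw [fsum_add, fsum_smul, hNw]
      _ = N • (fsum f + w) := (smul_add N _ _).symm
      _ = N • (fsum f' + w') := by rw [heq]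
      _ = fsum (N • f' + n • g') := by rw [smul_add, fsum_add, fsum_smul, hNw']
  have hsupp1 : ((N • f + n' • g).support : Set M) ⊆ Q := by
    intro q hq
    have := Finsupp.support_add (g₁ := N • f) (g₂ := n' • g) hq
    rcases Finset.mem_union.mp this with h | h
    · exact hf (Finsupp.support_smul h)
    · exact hg (Finsupp.support_smul h)
  have hsupp2 : ((N • f' + n • g').support : Set M) ⊆ Q := by
    intro q hq
    have := Finsupp.support_add (g₁ := N • f') (g₂ := n • g') hq
    rcases Finset.mem_union.mp this with h | h
    · exact hf' (Finsupp.support_smul h)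
    · exact hg' (Finsupp.support_smul h)
  have hcomb := hIF.1 _ _ hsupp1 hsupp2 key
  have hff' : f = f' := by
    ext q
    have hq := DFunLike.congr_fun hcomb q
    simp only [Finsupp.add_apply, Finsupp.smul_apply, smul_eq_mul] at hq
    have h1 : n' * g q < N := by
      rw [hN]; exact (Nat.mul_lt_mul_left hn').mpr (hglt q)
    have h2 : n * g' q < N := by
      rw [hN, mul_comm n' n]; exact (Nat.mul_lt_mul_left hn).mpr (hglt' q)
    have e1 : (N * f q + n' * g q) / N = f q := by
      rw [Nat.mul_add_div hNpos, Nat.div_eq_of_lt h1, add_zero]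
    have e2 : (N * f' q + n * g' q) / N = f' q := by
      rw [Nat.mul_add_div hNpos, Nat.div_eq_of_lt h2, add_zero]
    rw [← e1, ← e2, hq]
  constructor
  · rw [hff']
  · rw [hff'] at heq
    exact add_left_cancel heq
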